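/- arXiv:0902.4156 — 4 statements merged into one kernel-verified Lean document; each statement's English description precedes it below -/
import Mathlib

section
/- Let ε = 1 or ε = -1, let a, b, c : ℝ × ℝ → ℝ be smooth, let ξ : ℝ → ℝ be smooth and let λ ∈ ℝ. If u : ℝ³ → ℝ is smooth and satisfies the CGB equation with f ≡ 0, namely ∂x(∂t u + u ∂x u + ∂x² u) + ε ∂y² u + a(y,t) ∂y u + b(y,t) ∂x ∂y u + c(y,t) ∂x² u = 0 for all (x,y,t), then the function v(x,y,t) := u(x − λ ξ(t), y, t) + λ ξ'(t) also satisfies this equation for all (x,y,t). -/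
/-- Partial derivative in the first (`x`) variable. -/
noncomputable def pdx (u : ℝ → ℝ → ℝ → ℝ) : ℝ → ℝ → ℝ → ℝ :=
  fun x y t => deriv (fun s => u s y t) x

/-- Partial derivative in the second (`y`) variable. -/
noncomputable def pdy (u : ℝ → ℝ → ℝ → ℝ) : ℝ → ℝ → ℝ → ℝ :=
  fun x y t => deriv (fun s => u x s t) y

/-- Partial derivative in the third (`t`) variable. -/
noncomputable def pdt (u : ℝ → ℝ → ℝ → ℝ) : ℝ → ℝ → ℝ → ℝ :=
  fun x y t => deriv (fun s => u x y s) t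

/-- The canonical generalized Burgers (CGB) equation with `f ≡ 0`:
`∂x(∂t u + u ∂x u + ∂x² u) + ε ∂y² u + a(y,t) ∂y u + b(y,t) ∂x ∂y u + c(y,t) ∂x² u = 0`. -/
def IsCGB (ε : ℝ) (a b c : ℝ × ℝ → ℝ) (u : ℝ → ℝ → ℝ → ℝ) : Prop :=
  ∀ x y t : ℝ,
    pdx (fun x y t => pdt u x y t + u x y t * pdx u x y t + pdx (pdx u) x y t) x y t
      + ε * pdy (pdy u) x y t + a (y, t) * pdy u x y t
      + b (y, t) * pdx (pdy u) x y t + c (y, t) * pdx (pdx u) x y t = 0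


/-!
Galilean invariance. Shifting `x ↦ x - g t` adds `-g' ∂ₓu` to `∂ₜu`, and adding `g'` to `u`
adds `g' ∂ₓu` to `u ∂ₓu`, so the Burgers flux `∂ₜu + u ∂ₓu + ∂ₓ²u` of the new function is the
shifted flux of `u` plus `g''(t)`. That term does not depend on `x` and is killed by the outer
`∂ₓ`; every other term of the equation commutes with the shift.
-/

def shiftX (g : ℝ → ℝ) (w : ℝ → ℝ → ℝ → ℝ) : ℝ → ℝ → ℝ → ℝ :=
  fun x y t => w (x - g t) y t

noncomputable def burgersFlux (u : ℝ → ℝ → ℝ → ℝ) : ℝ → ℝ → ℝ → ℝ :=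
  fun x y t => pdt u x y t + u x y t * pdx u x y t + pdx (pdx u) x y t

section Partials

variable {g h : ℝ → ℝ} {w : ℝ → ℝ → ℝ → ℝ} {x y t : ℝ}

theorem pdx_shiftX : pdx (shiftX g w) = shiftX g (pdx w) := by
  funext x y t
  exact deriv_comp_sub_const (fun s => w s y t) (g t) x

theorem pdy_shiftX : pdy (shiftX g w) = shiftX g (pdy w) :=
  rfl

theorem pdx_add_fun :
    pdx (fun x y t => w x y t + h t) = pdx w := by
  funext x y t
  exact deriv_add_const (h t)

theorem pdy_add_fun :
    pdy (fun x y t => w x y t + h t) = pdy w := by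
  funext x y t
  exact deriv_add_const (h t)

theorem pdx_eq_fderiv
    (hw : DifferentiableAt ℝ (fun p : ℝ × ℝ × ℝ => w p.1 p.2.1 p.2.2) (x, y, t)) :
    pdx w x y t = fderiv ℝ (fun p : ℝ × ℝ × ℝ => w p.1 p.2.1 p.2.2) (x, y, t) (1, 0, 0) :=
  (HasFDerivAt.comp_hasDerivAt (l := fun p : ℝ × ℝ × ℝ => w p.1 p.2.1 p.2.2) x hw.hasFDerivAt
    ((hasDerivAt_id x).prodMk ((hasDerivAt_const x y).prodMk (hasDerivAt_const x t)))).deriv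

theorem pdt_eq_fderiv
    (hw : DifferentiableAt ℝ (fun p : ℝ × ℝ × ℝ => w p.1 p.2.1 p.2.2) (x, y, t)) :
    pdt w x y t = fderiv ℝ (fun p : ℝ × ℝ × ℝ => w p.1 p.2.1 p.2.2) (x, y, t) (0, 0, 1) :=
  (HasFDerivAt.comp_hasDerivAt (l := fun p : ℝ × ℝ × ℝ => w p.1 p.2.1 p.2.2) t hw.hasFDerivAt
    ((hasDerivAt_const t x).prodMk ((hasDerivAt_const t y).prodMk (hasDerivAt_id t)))).deriv

theorem hasDerivAt_shiftX
    (hw : DifferentiableAt ℝ (fun p : ℝ × ℝ × ℝ => w p.1 p.2.1 p.2.2) (x - g t, y, t))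
    (hg : DifferentiableAt ℝ g t) :
    HasDerivAt (fun s => shiftX g w x y s)
      (pdt w (x - g t) y t - deriv g t * pdx w (x - g t) y t) t := by
  have hcurve : HasDerivAt (fun s : ℝ => ((x - g s, y, s) : ℝ × ℝ × ℝ))
      ((-deriv g t) • ((1, 0, 0) : ℝ × ℝ × ℝ) + (0, 0, 1)) t := by
    refine (((hasDerivAt_const t x).sub hg.hasDerivAt).prodMk
      ((hasDerivAt_const t y).prodMk (hasDerivAt_id t))).congr_deriv ?_
    simp
  refine (HasFDerivAt.comp_hasDerivAt (l := fun p : ℝ × ℝ × ℝ => w p.1 p.2.1 p.2.2) t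
    hw.hasFDerivAt hcurve).congr_deriv ?_
  rw [map_add, map_smul, smul_eq_mul, pdx_eq_fderiv hw, pdt_eq_fderiv hw]
  ring

end Partials

section Galilean

variable {g : ℝ → ℝ} {u : ℝ → ℝ → ℝ → ℝ}

theorem burgersFlux_shiftX_add_deriv
    (hu : Differentiable ℝ (fun p : ℝ × ℝ × ℝ => u p.1 p.2.1 p.2.2))
    (hg : Differentiable ℝ g) (hg' : Differentiable ℝ (deriv g)) :
    burgersFlux (fun x y t => shiftX g u x y t + deriv g t)
      = fun x y t => shiftX g (burgersFlux u) x y t + deriv (deriv g) t := by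
  funext x y t
  have hpdt : pdt (fun x y t => shiftX g u x y t + deriv g t) x y t
      = pdt u (x - g t) y t - deriv g t * pdx u (x - g t) y t + deriv (deriv g) t :=
    ((hasDerivAt_shiftX (hu _) (hg t)).add (hg' t).hasDerivAt).deriv
  simp only [burgersFlux, hpdt, pdx_add_fun, pdx_shiftX]
  simp only [shiftX, burgersFlux]
  ring

theorem IsCGB.shiftX_add_deriv {ε : ℝ} {a b c : ℝ × ℝ → ℝ}
    (hu : Differentiable ℝ (fun p : ℝ × ℝ × ℝ => u p.1 p.2.1 p.2.2))
    (hg : Differentiable ℝ g) (hg' : Differentiable ℝ (deriv g)) (heq : IsCGB ε a b c u) :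
    IsCGB ε a b c (fun x y t => shiftX g u x y t + deriv g t) := by
  intro x y t
  change pdx (burgersFlux _) x y t + _ + _ + _ + _ = 0
  rw [burgersFlux_shiftX_add_deriv hu hg hg']
  simp only [pdx_add_fun, pdy_add_fun, pdx_shiftX, pdy_shiftX]
  exact heq (x - g t) y t

end Galilean

theorem stmt0_general (ε : ℝ)
    (a b c : ℝ × ℝ → ℝ)
    (ξ : ℝ → ℝ) (hξ : ContDiff ℝ (⊤ : ℕ∞) ξ) (lam : ℝ)
    (u : ℝ → ℝ → ℝ → ℝ)
    (hu : ContDiff ℝ (⊤ : ℕ∞) (fun p : ℝ × ℝ × ℝ => u p.1 p.2.1 p.2.2))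
    (heq : IsCGB ε a b c u) :
    IsCGB ε a b c (fun x y t => u (x - lam * ξ t) y t + lam * deriv ξ t) := by
  have hξd : Differentiable ℝ ξ := hξ.differentiable (by simp)
  have hξ'd : Differentiable ℝ (deriv ξ) :=
    (contDiff_infty_iff_deriv.mp hξ).2.differentiable (by simp)
  have hderiv : deriv (fun t => lam * ξ t) = fun t => lam * deriv ξ t :=
    funext fun t => deriv_const_mul lam (hξd t)
  have key := heq.shiftX_add_deriv (hu.differentiable (by simp)) (hξd.const_mul lam)
    (by rw [hderiv]; exact hξ'd.const_mul lam)
  rw [hderiv] at key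
  exact key

theorem stmt0 (ε : ℝ) (hε : ε = 1 ∨ ε = -1)
    (a b c : ℝ × ℝ → ℝ)
    (ha : ContDiff ℝ (⊤ : ℕ∞) a) (hb : ContDiff ℝ (⊤ : ℕ∞) b)
    (hc : ContDiff ℝ (⊤ : ℕ∞) c)
    (ξ : ℝ → ℝ) (hξ : ContDiff ℝ (⊤ : ℕ∞) ξ) (lam : ℝ)
    (u : ℝ → ℝ → ℝ → ℝ)
    (hu : ContDiff ℝ (⊤ : ℕ∞) (fun p : ℝ × ℝ × ℝ => u p.1 p.2.1 p.2.2))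
    (heq : IsCGB ε a b c u) :
    IsCGB ε a b c (fun x y t => u (x - lam * ξ t) y t + lam * deriv ξ t) :=
  stmt0_general ε a b c ξ hξ lam u hu heq
end

section
/- Let ε = 1 or ε = -1, let b, c : ℝ → ℝ and η : ℝ → ℝ be smooth, and let λ ∈ ℝ. Define A(t) := (ε/2)(b(t) η(t) − η'(t)) and B(t) := −2 c(t) η(t) + (ε/2)(b'(t) η(t) + b(t)² η(t) − η''(t)). If u : ℝ³ → ℝ is smooth and satisfies ∂x(∂t u + u ∂x u + ∂x² u) + ε ∂y² u + b(t) y ∂x ∂y u + c(t) y² ∂x² u = 0 for all (x,y,t), then the function v(x,y,t) := u(x − A(t)(λ y − λ² η(t)/2), y − λ η(t), t) + B(t)(λ y − λ² η(t)/2) also satisfies this equation for all (x,y,t). (This is the finite form of the symmetry group generated by Y(η) in Theorem 2.) -/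
/-- The simplified canonical generalized Burgers equation (eq. (5.7) with `b₀ = c₁ = c₀ = 0`):
`∂x(∂t u + u ∂x u + ∂x² u) + ε ∂y² u + b(t) y ∂x ∂y u + c(t) y² ∂x² u = 0`. -/
def IsSCGB (ε : ℝ) (b c : ℝ → ℝ) (u : ℝ → ℝ → ℝ → ℝ) : Prop :=
  ∀ x y t : ℝ,
    pdx (fun x y t => pdt u x y t + u x y t * pdx u x y t + pdx (pdx u) x y t) x y t
      + ε * pdy (pdy u) x y t + b t * y * pdx (pdy u) x y t
      + c t * y ^ 2 * pdx (pdx u) x y t = 0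

/-- The coefficient `A(t) = (ε/2)(b(t)η(t) − η'(t))`. -/
noncomputable def Acoef (ε : ℝ) (b η : ℝ → ℝ) : ℝ → ℝ :=
  fun t => ε / 2 * (b t * η t - deriv η t)

/-- The coefficient `B(t) = −2c(t)η(t) + (ε/2)(b'(t)η(t) + b(t)²η(t) − η''(t))`. -/
noncomputable def Bcoef (ε : ℝ) (b c η : ℝ → ℝ) : ℝ → ℝ :=
  fun t => -2 * c t * η t + ε / 2 * (deriv b t * η t + (b t) ^ 2 * η t - deriv (deriv η) t)

def uncurry3 (u : ℝ → ℝ → ℝ → ℝ) : ℝ × ℝ × ℝ → ℝ := fun p => u p.1 p.2.1 p.2.2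

noncomputable def scgbLHS (ε : ℝ) (b c : ℝ → ℝ) (u : ℝ → ℝ → ℝ → ℝ) (x y t : ℝ) : ℝ :=
  pdx (fun x y t => pdt u x y t + u x y t * pdx u x y t + pdx (pdx u) x y t) x y t
    + ε * pdy (pdy u) x y t + b t * y * pdx (pdy u) x y t
    + c t * y ^ 2 * pdx (pdx u) x y t

theorem isSCGB_iff {ε : ℝ} {b c : ℝ → ℝ} {u : ℝ → ℝ → ℝ → ℝ} :
    IsSCGB ε b c u ↔ ∀ x y t, scgbLHS ε b c u x y t = 0 :=
  Iff.rfl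

section Partials

variable {u : ℝ → ℝ → ℝ → ℝ}

theorem pdx_eq_fderiv_s1 (hu : Differentiable ℝ (uncurry3 u)) (x y t : ℝ) :
    pdx u x y t = fderiv ℝ (uncurry3 u) (x, y, t) (1, 0, 0) :=
  ((hu _).hasFDerivAt.comp_hasDerivAt x
    ((hasDerivAt_id x).prodMk ((hasDerivAt_const x y).prodMk (hasDerivAt_const x t)))).deriv

theorem pdy_eq_fderiv (hu : Differentiable ℝ (uncurry3 u)) (x y t : ℝ) :
    pdy u x y t = fderiv ℝ (uncurry3 u) (x, y, t) (0, 1, 0) :=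
  ((hu _).hasFDerivAt.comp_hasDerivAt y
    ((hasDerivAt_const y x).prodMk ((hasDerivAt_id y).prodMk (hasDerivAt_const y t)))).deriv

theorem pdt_eq_fderiv_s1 (hu : Differentiable ℝ (uncurry3 u)) (x y t : ℝ) :
    pdt u x y t = fderiv ℝ (uncurry3 u) (x, y, t) (0, 0, 1) :=
  ((hu _).hasFDerivAt.comp_hasDerivAt t
    ((hasDerivAt_const t x).prodMk ((hasDerivAt_const t y).prodMk (hasDerivAt_id t)))).deriv

theorem fderiv_uncurry3_apply (hu : Differentiable ℝ (uncurry3 u)) (x y t a b c : ℝ) :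
    fderiv ℝ (uncurry3 u) (x, y, t) (a, b, c)
      = a * pdx u x y t + b * pdy u x y t + c * pdt u x y t := by
  have hv : ((a, b, c) : ℝ × ℝ × ℝ) = a • (1, 0, 0) + b • (0, 1, 0) + c • (0, 0, 1) := by
    ext <;> simp
  rw [hv, map_add, map_add, map_smul, map_smul, map_smul, pdx_eq_fderiv_s1 hu, pdy_eq_fderiv hu,
    pdt_eq_fderiv_s1 hu, smul_eq_mul, smul_eq_mul, smul_eq_mul]

theorem uncurry3_pdx_eq (hu : Differentiable ℝ (uncurry3 u)) :
    uncurry3 (pdx u) = fun p => fderiv ℝ (uncurry3 u) p (1, 0, 0) :=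
  funext fun _ => pdx_eq_fderiv_s1 hu _ _ _

theorem uncurry3_pdy_eq (hu : Differentiable ℝ (uncurry3 u)) :
    uncurry3 (pdy u) = fun p => fderiv ℝ (uncurry3 u) p (0, 1, 0) :=
  funext fun _ => pdy_eq_fderiv hu _ _ _

theorem uncurry3_pdt_eq (hu : Differentiable ℝ (uncurry3 u)) :
    uncurry3 (pdt u) = fun p => fderiv ℝ (uncurry3 u) p (0, 0, 1) :=
  funext fun _ => pdt_eq_fderiv_s1 hu _ _ _

variable {m n : WithTop ℕ∞}

theorem ContDiff.uncurry3_pdx (hu : ContDiff ℝ n (uncurry3 u)) (hmn : m + 1 ≤ n) :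
    ContDiff ℝ m (uncurry3 (pdx u)) := by
  rw [uncurry3_pdx_eq ((hu.of_le (le_add_self.trans hmn)).differentiable one_ne_zero)]
  exact (hu.fderiv_right hmn).clm_apply contDiff_const

theorem ContDiff.uncurry3_pdy (hu : ContDiff ℝ n (uncurry3 u)) (hmn : m + 1 ≤ n) :
    ContDiff ℝ m (uncurry3 (pdy u)) := by
  rw [uncurry3_pdy_eq ((hu.of_le (le_add_self.trans hmn)).differentiable one_ne_zero)]
  exact (hu.fderiv_right hmn).clm_apply contDiff_const

theorem ContDiff.uncurry3_pdt (hu : ContDiff ℝ n (uncurry3 u)) (hmn : m + 1 ≤ n) :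
    ContDiff ℝ m (uncurry3 (pdt u)) := by
  rw [uncurry3_pdt_eq ((hu.of_le (le_add_self.trans hmn)).differentiable one_ne_zero)]
  exact (hu.fderiv_right hmn).clm_apply contDiff_const

theorem fderiv_fderiv_apply {E : Type*} [NormedAddCommGroup E] [NormedSpace ℝ E] {F : E → ℝ}
    {p : E} (hF : DifferentiableAt ℝ (fderiv ℝ F) p) (v w : E) :
    fderiv ℝ (fun q => fderiv ℝ F q w) p v = fderiv ℝ (fderiv ℝ F) p v w := by
  simp [fderiv_clm_apply hF (differentiableAt_const w)]

theorem pdy_pdx_comm (hu : ContDiff ℝ 2 (uncurry3 u)) : pdy (pdx u) = pdx (pdy u) := by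
  have hd := hu.differentiable two_ne_zero
  have hd2 := (hu.fderiv_right (m := 1) (by norm_num)).differentiable one_ne_zero
  funext x y t
  rw [pdy_eq_fderiv ((hu.uncurry3_pdx (m := 1) (by norm_num)).differentiable one_ne_zero),
    pdx_eq_fderiv_s1 ((hu.uncurry3_pdy (m := 1) (by norm_num)).differentiable one_ne_zero),
    uncurry3_pdx_eq hd, uncurry3_pdy_eq hd, fderiv_fderiv_apply (hd2 _),
    fderiv_fderiv_apply (hd2 _)]
  exact (hu.contDiffAt.isSymmSndFDerivAt (by simp)).eq _ _

end Partials

def shear (α β γ : ℝ → ℝ) (g : ℝ → ℝ → ℝ → ℝ) : ℝ → ℝ → ℝ → ℝ :=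
  fun x y t => g (x + α t * y + β t) (y + γ t) t

theorem shear_zero (g : ℝ → ℝ → ℝ → ℝ) : shear 0 0 0 g = g := by
  funext x y t
  simp [shear]

section Shear

variable {α β γ α' β' γ' : ℝ → ℝ} {g : ℝ → ℝ → ℝ → ℝ}

theorem hasDerivAt_shear_x (hg : Differentiable ℝ (uncurry3 g)) (x y t : ℝ) :
    HasDerivAt (fun s => shear α β γ g s y t) (shear α β γ (pdx g) x y t) x := by
  have hP : HasDerivAt (fun s => ((s + α t * y + β t, y + γ t, t) : ℝ × ℝ × ℝ)) (1, 0, 0) x :=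
    (((hasDerivAt_id' x).add_const _).add_const _).prodMk
      ((hasDerivAt_const _ _).prodMk (hasDerivAt_const _ _))
  exact ((hg _).hasFDerivAt.comp_hasDerivAt x hP).congr_deriv
    (by simp [fderiv_uncurry3_apply hg, shear])

theorem hasDerivAt_shear_y (hg : Differentiable ℝ (uncurry3 g)) (x y t : ℝ) :
    HasDerivAt (fun s => shear α β γ g x s t)
      (α t * shear α β γ (pdx g) x y t + shear α β γ (pdy g) x y t) y := by
  have hP : HasDerivAt (fun s => ((x + α t * s + β t, s + γ t, t) : ℝ × ℝ × ℝ))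
      (α t * 1, 1, 0) y :=
    ((((hasDerivAt_id' y).const_mul (α t)).const_add x).add_const _).prodMk
      (((hasDerivAt_id' y).add_const _).prodMk (hasDerivAt_const _ _))
  exact ((hg _).hasFDerivAt.comp_hasDerivAt y hP).congr_deriv
    (by simp [fderiv_uncurry3_apply hg, shear])

theorem hasDerivAt_shear_t (hg : Differentiable ℝ (uncurry3 g)) (hα : HasDerivAt α (α' t) t)
    (hβ : HasDerivAt β (β' t) t) (hγ : HasDerivAt γ (γ' t) t) (x y : ℝ) :
    HasDerivAt (fun s => shear α β γ g x y s)
      ((α' t * y + β' t) * shear α β γ (pdx g) x y t + γ' t * shear α β γ (pdy g) x y t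
        + shear α β γ (pdt g) x y t) t := by
  have hP : HasDerivAt (fun s => ((x + α s * y + β s, y + γ s, s) : ℝ × ℝ × ℝ))
      (α' t * y + β' t, γ' t, 1) t :=
    (((hα.mul_const y).const_add x).add hβ).prodMk
      ((hγ.const_add y).prodMk (hasDerivAt_id' t))
  exact ((hg _).hasFDerivAt.comp_hasDerivAt t hP).congr_deriv
    (by simp [fderiv_uncurry3_apply hg, shear])

theorem pdx_shear (hg : Differentiable ℝ (uncurry3 g)) :
    pdx (shear α β γ g) = shear α β γ (pdx g) := by
  funext x y t
  exact (hasDerivAt_shear_x hg x y t).deriv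

theorem pdx_shear_add (hg : Differentiable ℝ (uncurry3 g)) (φ : ℝ → ℝ → ℝ) :
    pdx (fun x y t => shear α β γ g x y t + φ y t) = shear α β γ (pdx g) := by
  funext x y t
  exact ((hasDerivAt_shear_x hg x y t).add_const _).deriv

theorem pdy_shear_add_affine (hg : Differentiable ℝ (uncurry3 g)) (δ κ : ℝ → ℝ) (x y t : ℝ) :
    pdy (fun x y t => shear α β γ g x y t + (δ t * y + κ t)) x y t
      = α t * shear α β γ (pdx g) x y t + shear α β γ (pdy g) x y t + δ t :=
  (((hasDerivAt_shear_y hg x y t).add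
    (((hasDerivAt_id' y).const_mul (δ t)).add_const (κ t))).congr_deriv (by ring)).deriv

theorem pdt_shear_add_affine (hg : Differentiable ℝ (uncurry3 g)) (hα : HasDerivAt α (α' t) t)
    (hβ : HasDerivAt β (β' t) t) (hγ : HasDerivAt γ (γ' t) t) {δ κ : ℝ → ℝ}
    (hδ : DifferentiableAt ℝ δ t) (hκ : DifferentiableAt ℝ κ t) (x y : ℝ) :
    pdt (fun x y t => shear α β γ g x y t + (δ t * y + κ t)) x y t
      = (α' t * y + β' t) * shear α β γ (pdx g) x y t + γ' t * shear α β γ (pdy g) x y t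
        + shear α β γ (pdt g) x y t + (deriv δ t * y + deriv κ t) :=
  ((hasDerivAt_shear_t hg hα hβ hγ x y).add
    ((hδ.hasDerivAt.mul_const y).add hκ.hasDerivAt)).deriv

end Shear

section Transform

variable {α β γ α' β' γ' δ κ : ℝ → ℝ} {u : ℝ → ℝ → ℝ → ℝ}

local notation "𝒮" => shear α β γ

theorem scgbLHS_shear_add_affine (ε : ℝ) (b c : ℝ → ℝ) (hu : ContDiff ℝ 3 (uncurry3 u))
    (hα : ∀ t, HasDerivAt α (α' t) t) (hβ : ∀ t, HasDerivAt β (β' t) t)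
    (hγ : ∀ t, HasDerivAt γ (γ' t) t) (hδ : Differentiable ℝ δ) (hκ : Differentiable ℝ κ)
    (x y t : ℝ) :
    scgbLHS ε b c (fun x y t => 𝒮 u x y t + (δ t * y + κ t)) x y t
      = 𝒮 (pdx (pdt u)) x y t + (α' t * y + β' t) * 𝒮 (pdx (pdx u)) x y t
        + γ' t * 𝒮 (pdx (pdy u)) x y t + 𝒮 (pdx u) x y t ^ 2
        + (𝒮 u x y t + (δ t * y + κ t)) * 𝒮 (pdx (pdx u)) x y t + 𝒮 (pdx (pdx (pdx u))) x y t
        + ε * (α t ^ 2 * 𝒮 (pdx (pdx u)) x y t + 2 * α t * 𝒮 (pdx (pdy u)) x y t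
          + 𝒮 (pdy (pdy u)) x y t)
        + b t * y * (α t * 𝒮 (pdx (pdx u)) x y t + 𝒮 (pdx (pdy u)) x y t)
        + c t * y ^ 2 * 𝒮 (pdx (pdx u)) x y t := by
  have hu₀ := hu.differentiable (by norm_num)
  have hu₁ : ContDiff ℝ 2 (uncurry3 (pdx u)) := hu.uncurry3_pdx (by norm_num)
  have hux := hu₁.differentiable (by norm_num)
  have huy := (hu.uncurry3_pdy (m := 2) (by norm_num)).differentiable (by norm_num)
  have hut := (hu.uncurry3_pdt (m := 2) (by norm_num)).differentiable (by norm_num)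
  have huxx := (hu₁.uncurry3_pdx (m := 1) (by norm_num)).differentiable (by norm_num)
  set v := fun x y t => 𝒮 u x y t + (δ t * y + κ t)
  have hvx : pdx v = 𝒮 (pdx u) := pdx_shear_add hu₀ _
  have hvxx : pdx (pdx v) = 𝒮 (pdx (pdx u)) := by rw [hvx, pdx_shear hux]
  have hvy : pdy v = fun x y t => α t * 𝒮 (pdx u) x y t + 𝒮 (pdy u) x y t + δ t := by
    funext x y t
    exact pdy_shear_add_affine hu₀ δ κ x y t
  have hvt : pdt v = fun x y t => (α' t * y + β' t) * 𝒮 (pdx u) x y t + γ' t * 𝒮 (pdy u) x y t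
      + 𝒮 (pdt u) x y t + (deriv δ t * y + deriv κ t) := by
    funext x y t
    exact pdt_shear_add_affine hu₀ (hα t) (hβ t) (hγ t) (hδ t) (hκ t) x y
  have hvxy : pdx (pdy v) x y t = α t * 𝒮 (pdx (pdx u)) x y t + 𝒮 (pdx (pdy u)) x y t := by
    rw [hvy]
    exact ((((hasDerivAt_shear_x hux x y t).const_mul (α t)).add
      (hasDerivAt_shear_x huy x y t)).add_const _).deriv
  have hvyy : pdy (pdy v) x y t = α t * (α t * 𝒮 (pdx (pdx u)) x y t + 𝒮 (pdy (pdx u)) x y t)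
      + (α t * 𝒮 (pdx (pdy u)) x y t + 𝒮 (pdy (pdy u)) x y t) := by
    rw [hvy]
    exact ((((hasDerivAt_shear_y hux x y t).const_mul (α t)).add
      (hasDerivAt_shear_y huy x y t)).add_const _).deriv
  have hfirst : pdx (fun x y t => pdt v x y t + v x y t * pdx v x y t + pdx (pdx v) x y t) x y t
      = (α' t * y + β' t) * 𝒮 (pdx (pdx u)) x y t + γ' t * 𝒮 (pdx (pdy u)) x y t
        + 𝒮 (pdx (pdt u)) x y t
        + (𝒮 (pdx u) x y t * 𝒮 (pdx u) x y t
          + (𝒮 u x y t + (δ t * y + κ t)) * 𝒮 (pdx (pdx u)) x y t)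
        + 𝒮 (pdx (pdx (pdx u))) x y t := by
    simp only [hvt, hvx, pdx_shear hux, v]
    refine HasDerivAt.deriv (HasDerivAt.add (HasDerivAt.add ?_ ?_) ?_)
    · exact (((((hasDerivAt_shear_x hux x y t).const_mul _).add
        ((hasDerivAt_shear_x huy x y t).const_mul _)).add
        (hasDerivAt_shear_x hut x y t)).add_const _)
    · exact ((hasDerivAt_shear_x hu₀ x y t).add_const _).mul (hasDerivAt_shear_x hux x y t)
    · exact hasDerivAt_shear_x huxx x y t
  rw [scgbLHS, hfirst, hvyy, hvxy, hvxx, pdy_pdx_comm (hu.of_le (by norm_num))]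
  ring

theorem scgbLHS_shear_add_affine_eq (ε : ℝ) (b c : ℝ → ℝ) (hu : ContDiff ℝ 3 (uncurry3 u))
    (hα : ∀ t, HasDerivAt α (α' t) t) (hβ : ∀ t, HasDerivAt β (β' t) t)
    (hγ : ∀ t, HasDerivAt γ (γ' t) t) (hδ : Differentiable ℝ δ) (hκ : Differentiable ℝ κ)
    (x y t : ℝ) :
    scgbLHS ε b c (fun x y t => 𝒮 u x y t + (δ t * y + κ t)) x y t
      = scgbLHS ε b c u (x + α t * y + β t) (y + γ t) t
        + (γ' t + 2 * ε * α t - b t * γ t) * 𝒮 (pdx (pdy u)) x y t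
        + ((α' t + δ t + b t * α t - 2 * c t * γ t) * y
          + (β' t + κ t + ε * α t ^ 2 - c t * γ t ^ 2)) * 𝒮 (pdx (pdx u)) x y t := by
  have hu_eq := scgbLHS_shear_add_affine (α := 0) (β := 0) (γ := 0) (α' := 0) (β' := 0)
    (γ' := 0) (δ := 0) (κ := 0) ε b c hu (fun t => hasDerivAt_const t 0)
    (fun t => hasDerivAt_const t 0) (fun t => hasDerivAt_const t 0) (differentiable_const 0)
    (differentiable_const 0) (x + α t * y + β t) (y + γ t) t
  simp only [shear_zero, Pi.zero_apply, zero_mul, add_zero, zero_add] at hu_eq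
  rw [scgbLHS_shear_add_affine ε b c hu hα hβ hγ hδ hκ, hu_eq]
  simp only [shear]
  ring

end Transform

section Coefficients

variable {ε : ℝ} {b c η : ℝ → ℝ} {t : ℝ}

theorem hasDerivAt_Acoef (hb : DifferentiableAt ℝ b t) (hη : DifferentiableAt ℝ η t)
    (hη' : DifferentiableAt ℝ (deriv η) t) :
    HasDerivAt (Acoef ε b η) (ε / 2 * (deriv b t * η t + b t * deriv η t - deriv (deriv η) t)) t :=
  ((hb.hasDerivAt.mul hη.hasDerivAt).sub hη'.hasDerivAt).const_mul (ε / 2)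

theorem Bcoef_eq (hb : DifferentiableAt ℝ b t) (hη : DifferentiableAt ℝ η t)
    (hη' : DifferentiableAt ℝ (deriv η) t) :
    Bcoef ε b c η t = deriv (Acoef ε b η) t + b t * Acoef ε b η t - 2 * c t * η t := by
  rw [(hasDerivAt_Acoef hb hη hη').deriv, Bcoef, Acoef]
  ring

theorem two_mul_mul_Acoef (hε : ε ^ 2 = 1) :
    2 * ε * Acoef ε b η t = b t * η t - deriv η t := by
  rw [Acoef]
  linear_combination (b t * η t - deriv η t) * hε

theorem differentiable_Bcoef (hb : Differentiable ℝ b) (hb' : Differentiable ℝ (deriv b))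
    (hc : Differentiable ℝ c) (hη : Differentiable ℝ η)
    (hη'' : Differentiable ℝ (deriv (deriv η))) : Differentiable ℝ (Bcoef ε b c η) := by
  unfold Bcoef
  fun_prop

end Coefficients

theorem scgbLHS_symmetry {ε : ℝ} (hε : ε ^ 2 = 1) {b c η : ℝ → ℝ} (hb : Differentiable ℝ b)
    (hb' : Differentiable ℝ (deriv b)) (hc : Differentiable ℝ c) (hη : Differentiable ℝ η)
    (hη' : Differentiable ℝ (deriv η)) (hη'' : Differentiable ℝ (deriv (deriv η))) (lam : ℝ)
    {u : ℝ → ℝ → ℝ → ℝ} (hu : ContDiff ℝ 3 (uncurry3 u)) (x y t : ℝ) :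
    scgbLHS ε b c (fun x y t =>
      u (x - Acoef ε b η t * (lam * y - lam ^ 2 * η t / 2)) (y - lam * η t) t
        + Bcoef ε b c η t * (lam * y - lam ^ 2 * η t / 2)) x y t
      = scgbLHS ε b c u (x - Acoef ε b η t * (lam * y - lam ^ 2 * η t / 2)) (y - lam * η t) t := by
  have hA : ∀ t, HasDerivAt (Acoef ε b η) (deriv (Acoef ε b η) t) t := fun t =>
    (hasDerivAt_Acoef (hb t) (hη t) (hη' t)).differentiableAt.hasDerivAt
  have hB := differentiable_Bcoef (ε := ε) hb hb' hc hη hη''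
  have hA2 := two_mul_mul_Acoef (b := b) (η := η) (t := t) hε
  have hB_eq := Bcoef_eq (ε := ε) (c := c) (hb t) (hη t) (hη' t)
  set A := Acoef ε b η
  set B := Bcoef ε b c η
  have hv : (fun x y t =>
      u (x - A t * (lam * y - lam ^ 2 * η t / 2)) (y - lam * η t) t
        + B t * (lam * y - lam ^ 2 * η t / 2))
      = fun x y t => shear (fun t => -(lam * A t)) (fun t => lam ^ 2 * (A t * η t) / 2)
          (fun t => -(lam * η t)) u x y t + (lam * B t * y + -(lam ^ 2 * (B t * η t) / 2)) := by
    funext x y t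
    simp only [shear]
    ring_nf
  rw [hv, scgbLHS_shear_add_affine_eq (α := fun t => -(lam * A t))
    (β := fun t => lam ^ 2 * (A t * η t) / 2) (γ := fun t => -(lam * η t))
    (δ := fun t => lam * B t) (κ := fun t => -(lam ^ 2 * (B t * η t) / 2)) ε b c hu
    (fun t => ((hA t).const_mul lam).neg)
    (fun t => (((hA t).mul (hη t).hasDerivAt).const_mul _).div_const 2)
    (fun t => ((hη t).hasDerivAt.const_mul lam).neg) (by fun_prop) (by fun_prop)]
  have hxy : -(lam * deriv η t) + 2 * ε * -(lam * A t) - b t * -(lam * η t) = 0 := by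
    linear_combination (-lam) * hA2
  have hxx₁ : -(lam * deriv A t) + lam * B t + b t * -(lam * A t) - 2 * c t * -(lam * η t) = 0 := by
    linear_combination lam * hB_eq
  have hxx₀ : lam ^ 2 * (deriv A t * η t + A t * deriv η t) / 2 + -(lam ^ 2 * (B t * η t) / 2)
      + ε * (-(lam * A t)) ^ 2 - c t * (-(lam * η t)) ^ 2 = 0 := by
    linear_combination (-(lam ^ 2 * η t / 2)) * hB_eq + (lam ^ 2 * A t / 2) * hA2
  have hx : x + -(lam * A t) * y + lam ^ 2 * (A t * η t) / 2
      = x - A t * (lam * y - lam ^ 2 * η t / 2) := by ring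
  have hy : y + -(lam * η t) = y - lam * η t := by ring
  rw [hx, hy, hxy, hxx₁, hxx₀]
  ring

theorem stmt1 (ε : ℝ) (hε : ε = 1 ∨ ε = -1)
    (b c η : ℝ → ℝ)
    (hb : ContDiff ℝ (⊤ : ℕ∞) b) (hc : ContDiff ℝ (⊤ : ℕ∞) c)
    (hη : ContDiff ℝ (⊤ : ℕ∞) η) (lam : ℝ)
    (u : ℝ → ℝ → ℝ → ℝ)
    (hu : ContDiff ℝ (⊤ : ℕ∞) (fun p : ℝ × ℝ × ℝ => u p.1 p.2.1 p.2.2))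
    (heq : IsSCGB ε b c u) :
    IsSCGB ε b c (fun x y t =>
      u (x - Acoef ε b η t * (lam * y - lam ^ 2 * η t / 2)) (y - lam * η t) t
        + Bcoef ε b c η t * (lam * y - lam ^ 2 * η t / 2)) := by
  have hε2 : ε ^ 2 = 1 := by rcases hε with rfl | rfl <;> norm_num
  obtain ⟨hbd, hb'⟩ := contDiff_infty_iff_deriv.mp hb
  obtain ⟨hηd, hη'⟩ := contDiff_infty_iff_deriv.mp hη
  obtain ⟨hη'd, hη''⟩ := contDiff_infty_iff_deriv.mp hη'
  rw [isSCGB_iff] at heq ⊢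
  intro x y t
  rw [scgbLHS_symmetry hε2 hbd (hb'.differentiable (by simp)) (hc.differentiable (by simp))
    hηd hη'd (hη''.differentiable (by simp)) lam (hu.of_le (by norm_cast))]
  exact heq _ _ _
end

section
/- Let ε = 1 or ε = -1, let b, c : ℝ × ℝ → ℝ be smooth, let ξ : ℝ → ℝ be smooth with ξ(t) ≠ 0 for all t, and let ρ, σ : ℝ → ℝ be smooth. Then the function u(x,y,t) := (ξ'(t)/ξ(t)) x − (ε/2)(ξ''(t)/ξ(t)) y² + ρ(t) y + σ(t) satisfies ∂x(∂t u + u ∂x u + ∂x² u) + ε ∂y² u + b(y,t) ∂x ∂y u + c(y,t) ∂x² u = 0 for all (x,y,t). -/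
/-!
Write `u = K(t) x + M(t) y² + ρ(t) y + σ(t)`. Every mixed or second `x`-derivative of `u`
vanishes and `∂x u = K`, so the CGB operator applied to `u` collapses to the function
`K' + K² + 2 ε M` of `t` alone. For `K = ξ'/ξ` the Riccati identity `K' + K² = ξ''/ξ` holds,
and the choice `M = -(ε/2) ξ''/ξ` cancels it because `ε² = 1`.
-/

noncomputable def cgbOperator (ε : ℝ) (b c : ℝ × ℝ → ℝ) (u : ℝ → ℝ → ℝ → ℝ) :
    ℝ → ℝ → ℝ → ℝ :=
  fun x y t => pdx (fun x y t => pdt u x y t + u x y t * pdx u x y t + pdx (pdx u) x y t) x y t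
    + ε * pdy (pdy u) x y t + b (y, t) * pdx (pdy u) x y t + c (y, t) * pdx (pdx u) x y t

def quadAnsatz (K M ρ σ : ℝ → ℝ) : ℝ → ℝ → ℝ → ℝ :=
  fun x y t => K t * x + M t * y ^ 2 + ρ t * y + σ t

lemma pdx_const (f : ℝ → ℝ → ℝ) : pdx (fun _ y t => f y t) = 0 := by
  ext x y t
  simp [pdx]

lemma pdx_affine (a b : ℝ → ℝ → ℝ) : pdx (fun x y t => a y t * x + b y t) = fun _ y t => a y t := by
  ext x y t
  exact ((hasDerivAt_id x).const_mul (a y t) |>.add_const (b y t)).deriv.trans (mul_one _)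

lemma pdy_quadratic (a b c : ℝ → ℝ → ℝ) :
    pdy (fun x y t => a x t * y ^ 2 + b x t * y + c x t) = fun x y t => 2 * a x t * y + b x t := by
  ext x y t
  refine (((hasDerivAt_pow 2 y).const_mul (a x t)).add
    ((hasDerivAt_id y).const_mul (b x t)) |>.add_const (c x t)).deriv.trans ?_
  norm_num
  ring

section quadAnsatz

variable (K M ρ σ : ℝ → ℝ)

lemma pdx_quadAnsatz : pdx (quadAnsatz K M ρ σ) = fun _ _ t => K t := by
  have hx : quadAnsatz K M ρ σ = fun x y t => K t * x + (M t * y ^ 2 + ρ t * y + σ t) := by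
    ext; simp only [quadAnsatz]; ring
  rw [hx, pdx_affine]

lemma pdy_quadAnsatz : pdy (quadAnsatz K M ρ σ) = fun _ y t => 2 * M t * y + ρ t := by
  have hy : quadAnsatz K M ρ σ = fun x y t => M t * y ^ 2 + ρ t * y + (K t * x + σ t) := by
    ext; simp only [quadAnsatz]; ring
  rw [hy, pdy_quadratic]

lemma pdt_quadAnsatz (hK : Differentiable ℝ K) (hM : Differentiable ℝ M)
    (hρ : Differentiable ℝ ρ) (hσ : Differentiable ℝ σ) :
    pdt (quadAnsatz K M ρ σ) = quadAnsatz (deriv K) (deriv M) (deriv ρ) (deriv σ) := by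
  ext x y t
  exact ((((hK t).hasDerivAt.mul_const x).add ((hM t).hasDerivAt.mul_const (y ^ 2))).add
    ((hρ t).hasDerivAt.mul_const y)).add (hσ t).hasDerivAt |>.deriv

lemma cgbOperator_quadAnsatz (ε : ℝ) (b c : ℝ × ℝ → ℝ) (hK : Differentiable ℝ K)
    (hM : Differentiable ℝ M) (hρ : Differentiable ℝ ρ) (hσ : Differentiable ℝ σ) (x y t : ℝ) :
    cgbOperator ε b c (quadAnsatz K M ρ σ) x y t = deriv K t + K t ^ 2 + 2 * ε * M t := by
  have hxx : pdx (pdx (quadAnsatz K M ρ σ)) = 0 := by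
    rw [pdx_quadAnsatz]; exact pdx_const fun _ t => K t
  have hxy : pdx (pdy (quadAnsatz K M ρ σ)) = 0 := by
    rw [pdy_quadAnsatz]; exact pdx_const fun y t => 2 * M t * y + ρ t
  have hyy : pdy (pdy (quadAnsatz K M ρ σ)) = fun _ _ t => 2 * M t := by
    rw [pdy_quadAnsatz]
    simpa using pdy_quadratic (fun _ _ => 0) (fun _ t => 2 * M t) (fun _ t => ρ t)
  have hinner : (fun x y t => pdt (quadAnsatz K M ρ σ) x y t
      + quadAnsatz K M ρ σ x y t * pdx (quadAnsatz K M ρ σ) x y t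
      + pdx (pdx (quadAnsatz K M ρ σ)) x y t)
      = quadAnsatz (deriv K + K * K) (deriv M + M * K) (deriv ρ + ρ * K) (deriv σ + σ * K) := by
    ext x y t
    rw [pdt_quadAnsatz K M ρ σ hK hM hρ hσ, hxx, pdx_quadAnsatz]
    simp only [quadAnsatz, Pi.add_apply, Pi.mul_apply, Pi.zero_apply]
    ring
  rw [cgbOperator, hinner, pdx_quadAnsatz, hxx, hxy, hyy]
  simp only [Pi.add_apply, Pi.mul_apply, Pi.zero_apply]
  ring

end quadAnsatz

lemma deriv_logDeriv_add_sq {𝕜 : Type*} [NontriviallyNormedField 𝕜] {f : 𝕜 → 𝕜} {t : 𝕜}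
    (hf : DifferentiableAt 𝕜 f t) (hf' : DifferentiableAt 𝕜 (deriv f) t) (h0 : f t ≠ 0) :
    deriv (logDeriv f) t + logDeriv f t ^ 2 = deriv (deriv f) t / f t := by
  rw [logDeriv, deriv_div hf' hf h0, Pi.div_apply]
  field_simp
  ring

theorem stmt5_general (ε : ℝ) (hε : ε = 1 ∨ ε = -1)
    (b c : ℝ × ℝ → ℝ)
    (ξ : ℝ → ℝ) (hξ : ContDiff ℝ (⊤ : ℕ∞) ξ) (hξ0 : ∀ t, ξ t ≠ 0)
    (ρ σ : ℝ → ℝ)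
    (hρ : ContDiff ℝ (⊤ : ℕ∞) ρ) (hσ : ContDiff ℝ (⊤ : ℕ∞) σ)
    (u : ℝ → ℝ → ℝ → ℝ)
    (hudef : ∀ x y t, u x y t =
      deriv ξ t / ξ t * x - ε / 2 * (deriv (deriv ξ) t / ξ t) * y ^ 2 + ρ t * y + σ t) :
    ∀ x y t : ℝ,
      pdx (fun x y t => pdt u x y t + u x y t * pdx u x y t + pdx (pdx u) x y t) x y t
        + ε * pdy (pdy u) x y t + b (y, t) * pdx (pdy u) x y t
        + c (y, t) * pdx (pdx u) x y t = 0 := by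
  have hξ_diff (n : ℕ) : Differentiable ℝ (deriv^[n] ξ) :=
    (hξ.iterate_deriv n).differentiable (by simp)
  set M : ℝ → ℝ := fun s => -(ε / 2) * (deriv (deriv ξ) s / ξ s)
  have hu : u = quadAnsatz (logDeriv ξ) M ρ σ := by
    ext x y t
    simp only [hudef, quadAnsatz, logDeriv_apply, M]
    ring
  have hK : Differentiable ℝ (logDeriv ξ) := (hξ_diff 1).div (hξ_diff 0) hξ0
  have hM : Differentiable ℝ M := ((hξ_diff 2).div (hξ_diff 0) hξ0).const_mul (-(ε / 2))
  have hε_sq : ε ^ 2 = 1 := by rcases hε with rfl | rfl <;> norm_num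
  subst hu
  intro x y t
  change cgbOperator ε b c _ x y t = 0
  rw [cgbOperator_quadAnsatz _ _ _ _ ε b c hK hM (hρ.differentiable (by simp))
    (hσ.differentiable (by simp)),
    deriv_logDeriv_add_sq (f := ξ) (hξ_diff 0 t) (hξ_diff 1 t) (hξ0 t)]
  linear_combination (-(deriv (deriv ξ) t / ξ t)) * hε_sq

theorem stmt5 (ε : ℝ) (hε : ε = 1 ∨ ε = -1)
    (b c : ℝ × ℝ → ℝ)
    (hb : ContDiff ℝ (⊤ : ℕ∞) b) (hc : ContDiff ℝ (⊤ : ℕ∞) c)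
    (ξ : ℝ → ℝ) (hξ : ContDiff ℝ (⊤ : ℕ∞) ξ) (hξ0 : ∀ t, ξ t ≠ 0)
    (ρ σ : ℝ → ℝ)
    (hρ : ContDiff ℝ (⊤ : ℕ∞) ρ) (hσ : ContDiff ℝ (⊤ : ℕ∞) σ)
    (u : ℝ → ℝ → ℝ → ℝ)
    (hudef : ∀ x y t, u x y t =
      deriv ξ t / ξ t * x - ε / 2 * (deriv (deriv ξ) t / ξ t) * y ^ 2 + ρ t * y + σ t) :
    ∀ x y t : ℝ,
      pdx (fun x y t => pdt u x y t + u x y t * pdx u x y t + pdx (pdx u) x y t) x y t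
        + ε * pdy (pdy u) x y t + b (y, t) * pdx (pdy u) x y t
        + c (y, t) * pdx (pdx u) x y t = 0 :=
  stmt5_general ε hε b c ξ hξ hξ0 ρ σ hρ hσ u hudef
end

section
/- Let ε = 1 or ε = -1, let b, c : ℝ → ℝ and ξ : ℝ → ℝ be smooth, and let η : ℝ → ℝ be smooth with η(t) ≠ 0 for all t. Suppose F : ℝ × ℝ → ℝ is a smooth function of (z,t) satisfying the reduced equation ∂z(∂t F + F ∂z F + ∂z² F) + ε (ξ(t)²/η(t)²) ∂z² F + (1/2)(η'(t)/η(t) − b(t)) ∂z F − 2 c(t) ε + (1/2)(b'(t) + b(t)² − η''(t)/η(t)) = 0 for all (z,t). Then the function u(x,y,t) := (−c(t) + (ε/4)(b'(t) + b(t)² − η''(t)/η(t))) y² + (ξ'(t)/η(t)) y + F(z(x,y,t), t), where z(x,y,t) := x + (ε/4)(η'(t)/η(t) − b(t)) y² − (ξ(t)/η(t)) y, satisfies ∂x(∂t u + u ∂x u + ∂x² u) + ε ∂y² u + b(t) y ∂x ∂y u + c(t) y² ∂x² u = 0 for all (x,y,t). -/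
/-- Partial derivative of a function of two variables `(z,t)` in the first variable `z`. -/
noncomputable def pz (F : ℝ → ℝ → ℝ) : ℝ → ℝ → ℝ :=
  fun z t => deriv (fun s => F s t) z

/-- Partial derivative of a function of two variables `(z,t)` in the second variable `t`. -/
noncomputable def pt (F : ℝ → ℝ → ℝ) : ℝ → ℝ → ℝ :=
  fun z t => deriv (fun s => F z s) t

section PartialDerivatives

variable {F : ℝ → ℝ → ℝ} {γ τ : ℝ → ℝ} {γ' τ' s : ℝ}

lemma hasDerivAt_comp_fderiv (hF : DifferentiableAt ℝ (fun p : ℝ × ℝ => F p.1 p.2) (γ s, τ s))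
    (hγ : HasDerivAt γ γ' s) (hτ : HasDerivAt τ τ' s) :
    HasDerivAt (fun r => F (γ r) (τ r))
      (fderiv ℝ (fun p : ℝ × ℝ => F p.1 p.2) (γ s, τ s) (γ', τ')) s :=
  HasFDerivAt.comp_hasDerivAt (f := fun r => (γ r, τ r)) s hF.hasFDerivAt (hγ.prodMk hτ)

lemma pz_eq_fderiv {z t : ℝ} (hF : DifferentiableAt ℝ (fun p : ℝ × ℝ => F p.1 p.2) (z, t)) :
    pz F z t = fderiv ℝ (fun p : ℝ × ℝ => F p.1 p.2) (z, t) (1, 0) :=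
  (hasDerivAt_comp_fderiv hF (hasDerivAt_id z) (hasDerivAt_const z t)).deriv

lemma pt_eq_fderiv {z t : ℝ} (hF : DifferentiableAt ℝ (fun p : ℝ × ℝ => F p.1 p.2) (z, t)) :
    pt F z t = fderiv ℝ (fun p : ℝ × ℝ => F p.1 p.2) (z, t) (0, 1) :=
  (hasDerivAt_comp_fderiv hF (hasDerivAt_const t z) (hasDerivAt_id t)).deriv

lemma hasDerivAt_comp_pz_pt (hF : DifferentiableAt ℝ (fun p : ℝ × ℝ => F p.1 p.2) (γ s, τ s))
    (hγ : HasDerivAt γ γ' s) (hτ : HasDerivAt τ τ' s) :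
    HasDerivAt (fun r => F (γ r) (τ r)) (pz F (γ s) (τ s) * γ' + pt F (γ s) (τ s) * τ') s := by
  have hdir : ((γ', τ') : ℝ × ℝ) = γ' • ((1 : ℝ), (0 : ℝ)) + τ' • ((0 : ℝ), (1 : ℝ)) := by
    simp
  convert hasDerivAt_comp_fderiv hF hγ hτ using 1
  rw [pz_eq_fderiv hF, pt_eq_fderiv hF, hdir, map_add, map_smul, map_smul, smul_eq_mul,
    smul_eq_mul, mul_comm, mul_comm τ']

lemma hasDerivAt_comp_pz (hF : Differentiable ℝ (fun p : ℝ × ℝ => F p.1 p.2))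
    (hγ : HasDerivAt γ γ' s) (t : ℝ) :
    HasDerivAt (fun r => F (γ r) t) (pz F (γ s) t * γ') s := by
  simpa using hasDerivAt_comp_pz_pt (hF _) hγ (hasDerivAt_const s t)

lemma contDiff_pz {m n : WithTop ℕ∞} (hF : ContDiff ℝ n (fun p : ℝ × ℝ => F p.1 p.2))
    (hmn : m + 1 ≤ n) : ContDiff ℝ m (fun p : ℝ × ℝ => pz F p.1 p.2) := by
  have hD := (hF.of_le (le_add_self.trans hmn)).differentiable one_ne_zero
  simp_rw [pz_eq_fderiv (hD _)]
  exact (hF.fderiv_right hmn).clm_apply contDiff_const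

lemma contDiff_pt {m n : WithTop ℕ∞} (hF : ContDiff ℝ n (fun p : ℝ × ℝ => F p.1 p.2))
    (hmn : m + 1 ≤ n) : ContDiff ℝ m (fun p : ℝ × ℝ => pt F p.1 p.2) := by
  have hD := (hF.of_le (le_add_self.trans hmn)).differentiable one_ne_zero
  simp_rw [pt_eq_fderiv (hD _)]
  exact (hF.fderiv_right hmn).clm_apply contDiff_const

end PartialDerivatives

noncomputable def burgersOp (ε : ℝ) (b c : ℝ → ℝ) (u : ℝ → ℝ → ℝ → ℝ) (x y t : ℝ) : ℝ :=
  pdx (fun x y t => pdt u x y t + u x y t * pdx u x y t + pdx (pdx u) x y t) x y t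
    + ε * pdy (pdy u) x y t + b t * y * pdx (pdy u) x y t + c t * y ^ 2 * pdx (pdx u) x y t

def similarityVar (A B : ℝ → ℝ) (x y t : ℝ) : ℝ := x + A t * y ^ 2 - B t * y

section Ansatz

variable {F : ℝ → ℝ → ℝ} {G : ℝ → ℝ → ℝ} {P Q A B : ℝ → ℝ} {u : ℝ → ℝ → ℝ → ℝ}
  {P' Q' A' B' : ℝ}

lemma hasDerivAt_comp_similarityVar_x (hG : Differentiable ℝ (fun p : ℝ × ℝ => G p.1 p.2))
    (x y t : ℝ) :
    HasDerivAt (fun s => G (similarityVar A B s y t) t) (pz G (similarityVar A B x y t) t) x := by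
  have hz : HasDerivAt (fun s => similarityVar A B s y t) 1 x :=
    ((hasDerivAt_id x).add_const _).sub_const _
  simpa using hasDerivAt_comp_pz hG hz t

lemma hasDerivAt_comp_similarityVar_y (hG : Differentiable ℝ (fun p : ℝ × ℝ => G p.1 p.2))
    (x y t : ℝ) :
    HasDerivAt (fun s => G (similarityVar A B x s t) t)
      (pz G (similarityVar A B x y t) t * (2 * A t * y - B t)) y := by
  have hz : HasDerivAt (fun s => similarityVar A B x s t) (2 * A t * y - B t) y := by
    have h := (((hasDerivAt_pow 2 y).const_mul (A t)).const_add x).sub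
      ((hasDerivAt_id y).const_mul (B t))
    exact h.congr_deriv (by simp; ring)
  exact hasDerivAt_comp_pz hG hz t

variable (hu : ∀ x y t, u x y t = P t * y ^ 2 + Q t * y + F (similarityVar A B x y t) t)
include hu

lemma pdx_ansatz (hF : Differentiable ℝ (fun p : ℝ × ℝ => F p.1 p.2)) (x y t : ℝ) :
    pdx u x y t = pz F (similarityVar A B x y t) t := by
  simp only [pdx, hu]
  exact ((hasDerivAt_comp_similarityVar_x hF x y t).const_add _).deriv

lemma pdx_pdx_ansatz (hF : ContDiff ℝ 2 (fun p : ℝ × ℝ => F p.1 p.2)) (x y t : ℝ) :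
    pdx (pdx u) x y t = pz (pz F) (similarityVar A B x y t) t := by
  show deriv (fun s => pdx u s y t) x = _
  simp only [pdx_ansatz hu (hF.differentiable two_ne_zero)]
  exact ((hasDerivAt_comp_similarityVar_x
    ((contDiff_pz hF le_rfl).differentiable one_ne_zero) x y t)).deriv

lemma pdy_ansatz (hF : Differentiable ℝ (fun p : ℝ × ℝ => F p.1 p.2)) (x y t : ℝ) :
    pdy u x y t = 2 * P t * y + Q t
      + pz F (similarityVar A B x y t) t * (2 * A t * y - B t) := by
  simp only [pdy, hu]
  have hpoly : HasDerivAt (fun s => P t * s ^ 2 + Q t * s) (2 * P t * y + Q t) y := by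
    have h := ((hasDerivAt_pow 2 y).const_mul (P t)).add ((hasDerivAt_id y).const_mul (Q t))
    exact h.congr_deriv (by simp; ring)
  exact (hpoly.add (hasDerivAt_comp_similarityVar_y hF x y t)).deriv

lemma pdy_pdy_ansatz (hF : ContDiff ℝ 2 (fun p : ℝ × ℝ => F p.1 p.2)) (x y t : ℝ) :
    pdy (pdy u) x y t = 2 * P t
      + pz (pz F) (similarityVar A B x y t) t * (2 * A t * y - B t) ^ 2
      + 2 * A t * pz F (similarityVar A B x y t) t := by
  show deriv (fun s => pdy u x s t) y = _
  simp only [pdy_ansatz hu (hF.differentiable two_ne_zero)]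
  have hlin₁ : HasDerivAt (fun s => 2 * P t * s + Q t) (2 * P t) y := by
    simpa using ((hasDerivAt_id y).const_mul (2 * P t)).add_const (Q t)
  have hlin₂ : HasDerivAt (fun s => 2 * A t * s - B t) (2 * A t) y := by
    simpa using ((hasDerivAt_id y).const_mul (2 * A t)).sub_const (B t)
  have h := hlin₁.add ((hasDerivAt_comp_similarityVar_y (A := A) (B := B)
    ((contDiff_pz hF le_rfl).differentiable one_ne_zero) x y t).mul hlin₂)
  exact h.deriv.trans (by ring)

lemma pdx_pdy_ansatz (hF : ContDiff ℝ 2 (fun p : ℝ × ℝ => F p.1 p.2)) (x y t : ℝ) :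
    pdx (pdy u) x y t = pz (pz F) (similarityVar A B x y t) t * (2 * A t * y - B t) := by
  show deriv (fun s => pdy u s y t) x = _
  simp only [pdy_ansatz hu (hF.differentiable two_ne_zero)]
  exact (((hasDerivAt_comp_similarityVar_x
    ((contDiff_pz hF le_rfl).differentiable one_ne_zero) x y t).mul_const _).const_add _).deriv

lemma pdt_ansatz (hF : Differentiable ℝ (fun p : ℝ × ℝ => F p.1 p.2)) {t : ℝ}
    (hP : HasDerivAt P P' t) (hQ : HasDerivAt Q Q' t) (hA : HasDerivAt A A' t)
    (hB : HasDerivAt B B' t) (x y : ℝ) :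
    pdt u x y t = P' * y ^ 2 + Q' * y
      + pz F (similarityVar A B x y t) t * (A' * y ^ 2 - B' * y)
      + pt F (similarityVar A B x y t) t := by
  simp only [pdt, hu]
  have hz : HasDerivAt (fun s => similarityVar A B x y s) (A' * y ^ 2 - B' * y) t :=
    ((hA.mul_const _).const_add x).sub (hB.mul_const y)
  have h := ((hP.mul_const (y ^ 2)).add (hQ.mul_const y)).add
    (hasDerivAt_comp_pz_pt (hF _) hz (hasDerivAt_id t))
  exact h.deriv.trans (by simp only [id, mul_one]; ring)

lemma pdx_flux_ansatz (hF : ContDiff ℝ 3 (fun p : ℝ × ℝ => F p.1 p.2)) {t : ℝ}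
    (hP : HasDerivAt P P' t) (hQ : HasDerivAt Q Q' t) (hA : HasDerivAt A A' t)
    (hB : HasDerivAt B B' t) (x y : ℝ) :
    pdx (fun x y t => pdt u x y t + u x y t * pdx u x y t + pdx (pdx u) x y t) x y t
      = pz (fun z t => pt F z t + F z t * pz F z t + pz (pz F) z t) (similarityVar A B x y t) t
        + (P t * y ^ 2 + Q t * y + A' * y ^ 2 - B' * y)
          * pz (pz F) (similarityVar A B x y t) t := by
  have hF₂ : ContDiff ℝ 2 (fun p : ℝ × ℝ => F p.1 p.2) := hF.of_le (by norm_num)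
  have hF₁ : Differentiable ℝ (fun p : ℝ × ℝ => F p.1 p.2) := hF.differentiable (by norm_num)
  have hpzF : Differentiable ℝ (fun p : ℝ × ℝ => pz F p.1 p.2) :=
    (contDiff_pz hF₂ le_rfl).differentiable one_ne_zero
  have hflux : Differentiable ℝ (fun p : ℝ × ℝ =>
      pt F p.1 p.2 + F p.1 p.2 * pz F p.1 p.2 + pz (pz F) p.1 p.2) :=
    (((contDiff_pt (m := 1) hF (by norm_num)).add
      ((hF.of_le (by norm_num)).mul (contDiff_pz (m := 1) hF (by norm_num)))).add
      (contDiff_pz (m := 1) (contDiff_pz (m := 2) hF (by norm_num)) (by norm_num))).differentiable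
      one_ne_zero
  -- in `x`: a constant, plus a multiple of `pz F`, plus the flux of `F`
  have hrw : (fun s => pdt u s y t + u s y t * pdx u s y t + pdx (pdx u) s y t)
      = fun s => P' * y ^ 2 + Q' * y
        + (P t * y ^ 2 + Q t * y + A' * y ^ 2 - B' * y) * pz F (similarityVar A B s y t) t
        + (pt F (similarityVar A B s y t) t + F (similarityVar A B s y t) t
          * pz F (similarityVar A B s y t) t + pz (pz F) (similarityVar A B s y t) t) := by
    funext s
    rw [pdt_ansatz hu hF₁ hP hQ hA hB, hu, pdx_ansatz hu hF₁, pdx_pdx_ansatz hu hF₂]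
    ring
  show deriv (fun s => pdt u s y t + u s y t * pdx u s y t + pdx (pdx u) s y t) x = _
  rw [hrw]
  exact ((((hasDerivAt_comp_similarityVar_x hpzF x y t).const_mul _).const_add _).add
    (hasDerivAt_comp_similarityVar_x (G := fun z t => pt F z t + F z t * pz F z t
      + pz (pz F) z t) hflux x y t)).deriv.trans (by ring)

lemma burgersOp_ansatz (hF : ContDiff ℝ 3 (fun p : ℝ × ℝ => F p.1 p.2)) (ε : ℝ) (b c : ℝ → ℝ)
    {t : ℝ} (hP : DifferentiableAt ℝ P t) (hQ : DifferentiableAt ℝ Q t)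
    (hA : HasDerivAt A A' t) (hB : HasDerivAt B B' t) (x y : ℝ) :
    burgersOp ε b c u x y t
      = pz (fun z t => pt F z t + F z t * pz F z t + pz (pz F) z t) (similarityVar A B x y t) t
        + ((P t + A') * y ^ 2 + (Q t - B') * y + ε * (2 * A t * y - B t) ^ 2
            + b t * y * (2 * A t * y - B t) + c t * y ^ 2)
          * pz (pz F) (similarityVar A B x y t) t
        + 2 * ε * A t * pz F (similarityVar A B x y t) t + 2 * ε * P t := by
  have hF₂ : ContDiff ℝ 2 (fun p : ℝ × ℝ => F p.1 p.2) := hF.of_le (by norm_num)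
  rw [burgersOp, pdx_flux_ansatz hu hF hP.hasDerivAt hQ.hasDerivAt hA hB,
    pdy_pdy_ansatz hu hF₂, pdx_pdy_ansatz hu hF₂, pdx_pdx_ansatz hu hF₂]
  ring

end Ansatz

theorem stmt7 (ε : ℝ) (hε : ε = 1 ∨ ε = -1)
    (b c ξ : ℝ → ℝ)
    (hb : ContDiff ℝ (⊤ : ℕ∞) b) (hc : ContDiff ℝ (⊤ : ℕ∞) c)
    (hξ : ContDiff ℝ (⊤ : ℕ∞) ξ)
    (η : ℝ → ℝ) (hη : ContDiff ℝ (⊤ : ℕ∞) η) (hη0 : ∀ t, η t ≠ 0)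
    (F : ℝ → ℝ → ℝ)
    (hF : ContDiff ℝ (⊤ : ℕ∞) (fun p : ℝ × ℝ => F p.1 p.2))
    (hFeq : ∀ z t : ℝ,
      pz (fun z t => pt F z t + F z t * pz F z t + pz (pz F) z t) z t
        + ε * ((ξ t) ^ 2 / (η t) ^ 2) * pz (pz F) z t
        + 1 / 2 * (deriv η t / η t - b t) * pz F z t
        - 2 * c t * ε
        + 1 / 2 * (deriv b t + (b t) ^ 2 - deriv (deriv η) t / η t) = 0)
    (u : ℝ → ℝ → ℝ → ℝ)
    (hudef : ∀ x y t, u x y t =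
      (-c t + ε / 4 * (deriv b t + (b t) ^ 2 - deriv (deriv η) t / η t)) * y ^ 2
        + deriv ξ t / η t * y
        + F (x + ε / 4 * (deriv η t / η t - b t) * y ^ 2 - ξ t / η t * y) t) :
    ∀ x y t : ℝ,
      pdx (fun x y t => pdt u x y t + u x y t * pdx u x y t + pdx (pdx u) x y t) x y t
        + ε * pdy (pdy u) x y t + b t * y * pdx (pdy u) x y t
        + c t * y ^ 2 * pdx (pdx u) x y t = 0 := by
  have hderiv {f : ℝ → ℝ} (hf : ContDiff ℝ (⊤ : ℕ∞) f) : ContDiff ℝ (⊤ : ℕ∞) (deriv f) :=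
    (contDiff_infty_iff_deriv.mp hf).2
  have hdiff {f : ℝ → ℝ} (hf : ContDiff ℝ (⊤ : ℕ∞) f) : Differentiable ℝ f :=
    hf.differentiable (by simp)
  have Db := hdiff hb
  have Db' := hdiff (hderiv hb)
  have Dc := hdiff hc
  have Dξ := hdiff hξ
  have Dξ' := hdiff (hderiv hξ)
  have Dη := hdiff hη
  have Dη' := hdiff (hderiv hη)
  have Dη'' := hdiff (hderiv (hderiv hη))
  intro x y t
  -- derivatives in a form where no `η t * (η t)⁻¹` needs cancelling, so the last step is `ring`
  have hA : HasDerivAt (fun s => ε / 4 * (deriv η s / η s - b s))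
      (ε / 4 * (deriv (deriv η) t / η t - (deriv η t / η t) ^ 2 - deriv b t)) t :=
    ((((Dη' t).hasDerivAt.div (Dη t).hasDerivAt (hη0 t)).sub (Db t).hasDerivAt).const_mul
      (ε / 4)).congr_deriv (by field_simp)
  have hB : HasDerivAt (fun s => ξ s / η s) (deriv ξ t / η t - ξ t * deriv η t / η t ^ 2) t :=
    ((Dξ t).hasDerivAt.div (Dη t).hasDerivAt (hη0 t)).congr_deriv (by field_simp)
  have hP : DifferentiableAt ℝ
      (fun s => -c s + ε / 4 * (deriv b s + (b s) ^ 2 - deriv (deriv η) s / η s)) t := by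
    fun_prop (disch := exact hη0 t)
  have hQ : DifferentiableAt ℝ (fun s => deriv ξ s / η s) t := by
    fun_prop (disch := exact hη0 t)
  show burgersOp ε b c u x y t = 0
  rw [burgersOp_ansatz hudef (hF.of_le (by norm_cast)) ε b c hP hQ hA hB x y]
  have hreduced := hFeq
    (similarityVar (fun s => ε / 4 * (deriv η s / η s - b s)) (fun s => ξ s / η s) x y t) t
  rcases hε with rfl | rfl <;> linear_combination hreduced
end
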